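/- For every real ξ > 0, every complex ρ with |ρ| = 1, and all positive integers h ≤ L: S(ξ,ρ,L) ≤ S(ξ,ρ,L−h)·F(ξ,h), where S(ξ,ρ,L) = ∫₀¹ exp(ξ·Re(ρ·T_L(α))) dα and F(ξ,h) = sup over β ∈ [0,1] and complex ρ' with |ρ'| = 1 of 2^{−h}·∑_{r=0}^{2^h−1} exp(ξ·Re(ρ'·T_h((β+r)/2^h))). -/

import Mathlib

/-!
Cut `[0, 1]` into the `2 ^ h` intervals `[r / 2 ^ h, (r + 1) / 2 ^ h]` and substitute
`α = (β + r) / 2 ^ h`. Since `2 ^ h α ≡ β (mod 1)`, the last `L - h` terms of `T_L(α)` form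
`T_{L-h}(β)`, so the integrand factors as `exp(ξ Re(ρ T_{L-h}(β)))` times a term whose average
over `r` is at most `F(ξ, h)`.
-/

/-- `e x = exp(2πix)`. -/
noncomputable def e (x : ℝ) : ℂ := Complex.exp (2 * Real.pi * Complex.I * x)

/-- `T_L(α) = ∑_{0 ≤ n ≤ L-1} e(α·2^n)` (so `T_0 = 0`). -/
noncomputable def Th (L : ℕ) (α : ℝ) : ℂ := ∑ n ∈ Finset.range L, e (α * 2 ^ n)

/-- `S(ξ,ρ,L) = ∫₀¹ exp(ξ·Re(ρ·T_L(α))) dα`. -/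
noncomputable def Sint (ξ : ℝ) (ρ : ℂ) (L : ℕ) : ℝ :=
  ∫ α in (0 : ℝ)..1, Real.exp (ξ * (ρ * Th L α).re)

/-- `F(ξ,h) = sup_{β ∈ [0,1], |ρ'| = 1} 2^{-h} ∑_{r<2^h} exp(ξ·Re(ρ'·T_h((β+r)/2^h)))`. -/
noncomputable def F (ξ : ℝ) (h : ℕ) : ℝ :=
  sSup {y : ℝ | ∃ β ∈ Set.Icc (0 : ℝ) 1, ∃ ρ' : ℂ, ‖ρ'‖ = 1 ∧
    y = ((2 : ℝ) ^ h)⁻¹ *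
      ∑ r ∈ Finset.range (2 ^ h), Real.exp (ξ * (ρ' * Th h ((β + r) / 2 ^ h)).re)}

open Finset

@[fun_prop]
lemma continuous_e : Continuous e := by
  unfold e; fun_prop

lemma norm_e (x : ℝ) : ‖e x‖ = 1 := by
  simp [e, Complex.norm_exp, Complex.mul_re, Complex.mul_im]

lemma e_add_intCast (x : ℝ) (k : ℤ) : e (x + k) = e x := by
  rw [e, e, Complex.ofReal_add, mul_add, Complex.exp_add, Complex.ofReal_intCast,
    show 2 * Real.pi * Complex.I * k = k * (2 * Real.pi * Complex.I) by ring,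
    Complex.exp_int_mul_two_pi_mul_I, mul_one]

@[fun_prop]
lemma continuous_Th (L : ℕ) : Continuous (Th L) := by
  unfold Th; fun_prop

lemma norm_Th_le (L : ℕ) (α : ℝ) : ‖Th L α‖ ≤ L := by
  calc ‖Th L α‖ ≤ ∑ n ∈ range L, ‖e (α * 2 ^ n)‖ := norm_sum_le _ _
    _ = L := by simp [norm_e]

lemma Th_add_intCast (L : ℕ) (α : ℝ) (k : ℤ) : Th L (α + k) = Th L α := by
  refine sum_congr rfl fun n _ => ?_
  rw [add_mul, show (k : ℝ) * 2 ^ n = ((k * 2 ^ n : ℤ) : ℝ) by push_cast; ring, e_add_intCast]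

lemma Th_add (h m : ℕ) (α : ℝ) : Th (h + m) α = Th h α + Th m (2 ^ h * α) := by
  rw [Th, sum_range_add]
  congr 1
  refine sum_congr rfl fun n _ => ?_
  rw [pow_add, mul_left_comm, mul_assoc]

lemma Th_add_div_two_pow (h m : ℕ) (β : ℝ) (r : ℕ) :
    Th (h + m) ((β + r) / 2 ^ h) = Th h ((β + r) / 2 ^ h) + Th m β := by
  rw [Th_add, mul_div_cancel₀ _ (by positivity), ← Int.cast_natCast, Th_add_intCast]

lemma integral_zero_one_eq_integral_average_comp_add_div {E : Type*} [NormedAddCommGroup E]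
    [NormedSpace ℝ E] {f : ℝ → E} (hf : Continuous f) {n : ℕ} (hn : n ≠ 0) :
    ∫ x in (0 : ℝ)..1, f x = ∫ β in (0 : ℝ)..1, (n : ℝ)⁻¹ • ∑ r ∈ range n, f ((β + r) / n) := by
  have hn' : (n : ℝ) ≠ 0 := Nat.cast_ne_zero.2 hn
  have piece (r : ℕ) : ∫ x in (r / n : ℝ)..((r + 1 : ℕ) / n), f x
      = ∫ β in (0 : ℝ)..1, (n : ℝ)⁻¹ • f ((β + r) / n) := by
    rw [intervalIntegral.integral_smul,
      intervalIntegral.integral_comp_add_right (fun x => f (x / n)),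
      intervalIntegral.integral_comp_div f hn', inv_smul_smul₀ hn']
    push_cast
    ring_nf
  calc ∫ x in (0 : ℝ)..1, f x
      = ∑ r ∈ range n, ∫ x in (r / n : ℝ)..((r + 1 : ℕ) / n), f x := by
        rw [intervalIntegral.sum_integral_adjacent_intervals fun k _ => hf.intervalIntegrable _ _]
        simp [hn']
    _ = ∫ β in (0 : ℝ)..1, (n : ℝ)⁻¹ • ∑ r ∈ range n, f ((β + r) / n) := by
        simp only [piece, smul_sum]
        exact (intervalIntegral.integral_finsetSum fun r _ =>
          (continuous_const.smul (hf.comp (by fun_prop))).intervalIntegrable _ _).symm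

lemma exp_mul_re_mul_Th_le (ξ : ℝ) {ρ : ℂ} (hρ : ‖ρ‖ = 1) (h : ℕ) (α : ℝ) :
    Real.exp (ξ * (ρ * Th h α).re) ≤ Real.exp (|ξ| * h) := by
  refine Real.exp_le_exp.2 ?_
  calc ξ * (ρ * Th h α).re ≤ |ξ| * |(ρ * Th h α).re| := by rw [← abs_mul]; exact le_abs_self _
    _ ≤ |ξ| * ‖ρ * Th h α‖ := by gcongr; exact Complex.abs_re_le_norm _
    _ ≤ |ξ| * h := by rw [norm_mul, hρ, one_mul]; gcongr; exact norm_Th_le h α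

lemma le_F (ξ : ℝ) {ρ : ℂ} (hρ : ‖ρ‖ = 1) (h : ℕ) {β : ℝ} (hβ : β ∈ Set.Icc (0 : ℝ) 1) :
    ((2 : ℝ) ^ h)⁻¹ * ∑ r ∈ range (2 ^ h), Real.exp (ξ * (ρ * Th h ((β + r) / 2 ^ h)).re)
      ≤ F ξ h := by
  refine le_csSup ⟨Real.exp (|ξ| * h), ?_⟩ ⟨β, hβ, ρ, hρ, rfl⟩
  rintro y ⟨β', -, ρ', hρ', rfl⟩
  calc ((2 : ℝ) ^ h)⁻¹ * ∑ r ∈ range (2 ^ h), Real.exp (ξ * (ρ' * Th h ((β' + r) / 2 ^ h)).re)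
      ≤ ((2 : ℝ) ^ h)⁻¹ * ∑ r ∈ range (2 ^ h), Real.exp (|ξ| * h) := by
        gcongr ((2 : ℝ) ^ h)⁻¹ * ∑ r ∈ range (2 ^ h), ?_ with r
        exact exp_mul_re_mul_Th_le ξ hρ' h _
    _ = Real.exp (|ξ| * h) := by simp

lemma average_exp_mul_re_mul_Th_add (ξ : ℝ) (ρ : ℂ) (h m : ℕ) (β : ℝ) :
    ((2 : ℝ) ^ h)⁻¹ * ∑ r ∈ range (2 ^ h), Real.exp (ξ * (ρ * Th (h + m) ((β + r) / 2 ^ h)).re)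
      = Real.exp (ξ * (ρ * Th m β).re) * (((2 : ℝ) ^ h)⁻¹ *
        ∑ r ∈ range (2 ^ h), Real.exp (ξ * (ρ * Th h ((β + r) / 2 ^ h)).re)) := by
  simp only [Th_add_div_two_pow, mul_add, Complex.add_re, Real.exp_add, mul_sum]
  exact sum_congr rfl fun r _ => by ring

theorem Sint_le_Sint_mul_F_general (ξ : ℝ) (ρ : ℂ) (hρ : ‖ρ‖ = 1)
    (h L : ℕ) (hhL : h ≤ L) :
    Sint ξ ρ L ≤ Sint ξ ρ (L - h) * F ξ h := by
  obtain ⟨m, rfl⟩ := Nat.exists_eq_add_of_le hhL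
  rw [Nat.add_sub_cancel_left]
  calc Sint ξ ρ (h + m)
      = ∫ β in (0 : ℝ)..1, Real.exp (ξ * (ρ * Th m β).re) * (((2 : ℝ) ^ h)⁻¹ *
          ∑ r ∈ range (2 ^ h), Real.exp (ξ * (ρ * Th h ((β + r) / 2 ^ h)).re)) := by
        rw [Sint, integral_zero_one_eq_integral_average_comp_add_div (by fun_prop)
          (pow_ne_zero h two_ne_zero)]
        push_cast
        simp only [smul_eq_mul, average_exp_mul_re_mul_Th_add]
    _ ≤ ∫ β in (0 : ℝ)..1, Real.exp (ξ * (ρ * Th m β).re) * F ξ h := by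
        refine intervalIntegral.integral_mono_on zero_le_one ?_ ?_ fun β hβ =>
          mul_le_mul_of_nonneg_left (le_F ξ hρ h hβ) (Real.exp_nonneg _)
        all_goals exact Continuous.intervalIntegrable (by fun_prop) _ _
    _ = Sint ξ ρ m * F ξ h := intervalIntegral.integral_mul_const _ _

/-- The submultiplicative recursion `S(ξ,ρ,L) ≤ S(ξ,ρ,L-h)·F(ξ,h)` for `h ≤ L`. -/
theorem Sint_le_Sint_mul_F (ξ : ℝ) (hξ : 0 < ξ) (ρ : ℂ) (hρ : ‖ρ‖ = 1)
    (h L : ℕ) (hh : 0 < h) (hhL : h ≤ L) :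
    Sint ξ ρ L ≤ Sint ξ ρ (L - h) * F ξ h :=
  Sint_le_Sint_mul_F_general ξ ρ hρ h L hhL
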